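/- arXiv:1605.01971 — 2 statements merged into one kernel-verified Lean document; each statement's English description precedes it below -/
import Mathlib

section
/- Convergence of the upper-level method: let {δ_l} be a sequence of positive numbers decreasing to 0, and let {z^l} ⊆ X satisfy φ_i(z^l) ≤ δ_l for all i = 1,…,n and all l ≥ 1. Then {z^l} has limit points, and every limit point z̄ is a stationary point, i.e. Σ_{i=1}^n [⟨g_i(z̄), y_i − z̄_i⟩ + h_i(y_i) − h_i(z̄_i)] ≥ 0 for all y ∈ X. If moreover f is convex, then lim_{l→∞} μ(z^l) = μ* and every limit point of {z^l} minimizes μ over X. -/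
open scoped RealInnerProductSpace
open Filter Topology

noncomputable section

abbrev Blk {n : ℕ} (N : Fin n → ℕ) (i : Fin n) : Type :=
  EuclideanSpace ℝ (Fin (N i))

abbrev Tot {n : ℕ} (N : Fin n → ℕ) : Type :=
  PiLp 2 (fun i => EuclideanSpace ℝ (Fin (N i)))

/-!
The hypothesis `φ_i(z^l) ≤ δ_l` says `σ_i(z^l, v) ≤ δ_l` for every `v ∈ X_i`. For fixed `v`,
`x ↦ σ_i(x, v)` is lower semicontinuous on the compact set `X`, so the bound passes to every
cluster point as `σ_i(z̄, v) ≤ 0`, which is stationarity. If `f` is convex, the gradient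
inequality gives `μ(z^l) - μ(y) ≤ ∑ᵢ σ_i(z^l, y_i) ≤ n δ_l`; hence
`μ* ≤ μ(z^l) ≤ μ* + n δ_l`, and lower semicontinuity of `μ` carries
`μ(z^l) ≤ μ(y) + n δ_l` to the cluster points.
-/

open Set

theorem ConvexOn.le_sub_of_hasFDerivAt {E : Type*} [NormedAddCommGroup E] [NormedSpace ℝ E]
    {f : E → ℝ} {f' : E →L[ℝ] ℝ} {x : E} (hf : ConvexOn ℝ univ f) (hx : HasFDerivAt f f' x)
    (y : E) : f' (y - x) ≤ f y - f x := by
  have hline : ConvexOn ℝ univ (f ∘ AffineMap.lineMap (k := ℝ) x y) := by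
    simpa using hf.comp_affineMap (AffineMap.lineMap x y : ℝ →ᵃ[ℝ] E)
  have hderiv : HasDerivAt (f ∘ AffineMap.lineMap (k := ℝ) x y) (f' (y - x)) 0 := by
    refine HasFDerivAt.comp_hasDerivAt (0 : ℝ) ?_ AffineMap.hasDerivAt_lineMap
    simpa using hx
  simpa [slope] using hline.le_slope_of_hasDerivAt (mem_univ 0) (mem_univ 1) one_pos hderiv

theorem ConvexOn.inner_le_sub_of_hasGradientAt {E : Type*} [NormedAddCommGroup E]
    [InnerProductSpace ℝ E] [CompleteSpace E] {f : E → ℝ} {f' x : E} (hf : ConvexOn ℝ univ f)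
    (hx : HasGradientAt f f' x) (y : E) : ⟪f', y - x⟫ ≤ f y - f x := by
  simpa using hf.le_sub_of_hasFDerivAt hx.hasFDerivAt y

theorem MapClusterPt.le_of_lowerSemicontinuousOn {ι E : Type*} [TopologicalSpace E]
    {F : Filter ι} {u : ι → E} {x : E} {K : Set E} {ψ : E → ℝ} {δ : ι → ℝ} {c : ℝ}
    (hx : MapClusterPt x F u) (hxK : x ∈ K) (hψ : LowerSemicontinuousOn ψ K)
    (huK : ∀ l, u l ∈ K) (hδ : Tendsto δ F (𝓝 c)) (hle : ∀ l, ψ (u l) ≤ δ l) : ψ x ≤ c := by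
  by_contra! hcx
  obtain ⟨a, hca, hax⟩ := exists_between hcx
  have hnear := mem_nhdsWithin_iff_eventually.1 (hψ x hxK a hax)
  obtain ⟨l, hl, hδl⟩ := ((mapClusterPt_iff_frequently.1 hx _ hnear).and_eventually
    (hδ.eventually (gt_mem_nhds hca))).exists
  linarith [show a < ψ (u l) from hl (huK l), hle l]

theorem LowerSemicontinuousOn.tendsto_sInf_image_of_le_add {ι E : Type*} [TopologicalSpace E]
    {F : Filter ι} {K : Set E} {μ : E → ℝ} {u : ι → E} {ε : ι → ℝ}
    (hμ : LowerSemicontinuousOn μ K) (hK : IsCompact K) (huK : ∀ l, u l ∈ K)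
    (hε : Tendsto ε F (𝓝 0)) (hle : ∀ l, ∀ y ∈ K, μ (u l) ≤ μ y + ε l) :
    Tendsto (fun l => μ (u l)) F (𝓝 (sInf (μ '' K))) := by
  have hupper : Tendsto (fun l => sInf (μ '' K) + ε l) F (𝓝 (sInf (μ '' K))) := by
    simpa using tendsto_const_nhds.add hε
  refine tendsto_of_tendsto_of_tendsto_of_le_of_le tendsto_const_nhds hupper
    (fun l => csInf_le (hμ.bddBelow_of_isCompact hK) (mem_image_of_mem μ (huK l))) fun l => ?_
  rw [← sub_le_iff_le_add]
  exact le_csInf ⟨_, mem_image_of_mem μ (huK l)⟩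
    (forall_mem_image.2 fun y hy => sub_le_iff_le_add.2 (hle l y hy))

section Blocks

variable {ι : Type*} {E : ι → Type*} [∀ i, NormedAddCommGroup (E i)]

theorem PiLp.isCompact_setOf_forall_mem {s : ∀ i, Set (E i)} (hs : ∀ i, IsCompact (s i)) :
    IsCompact {x : PiLp 2 E | ∀ i, x i ∈ s i} := by
  simpa [Set.pi, PiLp.homeomorph] using
    (PiLp.homeomorph 2 E).isCompact_preimage.2 (isCompact_univ_pi hs)

theorem lowerSemicontinuousOn_apply_of_setOf_forall_mem {s : ∀ i, Set (E i)} {φ : E i → ℝ}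
    (hφ : LowerSemicontinuousOn φ (s i)) :
    LowerSemicontinuousOn (fun x : PiLp 2 E => φ (x i)) {x | ∀ j, x j ∈ s j} :=
  hφ.comp (PiLp.continuous_apply 2 E i).continuousOn fun _ hx => hx i

variable [∀ i, InnerProductSpace ℝ (E i)]

-- `blockGap g h i x v` is the paper's `σ_i(x, v)`.
def blockGap (g : PiLp 2 E → PiLp 2 E) (h : ∀ i, E i → ℝ) (i : ι) (x : PiLp 2 E) (v : E i) : ℝ :=
  ⟪g x i, x i - v⟫ + h i (x i) - h i v

variable {g : PiLp 2 E → PiLp 2 E} {h : ∀ i, E i → ℝ} {s : ∀ i, Set (E i)}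

theorem lowerSemicontinuousOn_blockGap [Fintype ι] (hg : Continuous g) {i : ι}
    (hh : LowerSemicontinuousOn (h i) (s i)) (v : E i) :
    LowerSemicontinuousOn (fun x => blockGap g h i x v) {x | ∀ j, x j ∈ s j} := by
  have hinner : Continuous fun x : PiLp 2 E => ⟪g x i, x i - v⟫ - h i v :=
    (((PiLp.continuous_apply 2 E i).comp hg).inner
      ((PiLp.continuous_apply 2 E i).sub continuous_const)).sub continuous_const
  have hsplit : (fun x => blockGap g h i x v) =
      fun x => (⟪g x i, x i - v⟫ - h i v) + h i (x i) := by
    funext x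
    simp only [blockGap]
    ring
  rw [hsplit]
  exact hinner.lowerSemicontinuous.lowerSemicontinuousOn _ |>.add
    (lowerSemicontinuousOn_apply_of_setOf_forall_mem hh)

theorem bddAbove_blockGap_image {i : ι} (hs : IsCompact (s i))
    (hh : LowerSemicontinuousOn (h i) (s i)) (x : PiLp 2 E) :
    BddAbove (blockGap g h i x '' s i) := by
  have hinner : Continuous fun v : E i => ⟪g x i, x i - v⟫ + h i (x i) :=
    (continuous_const.inner (continuous_const.sub continuous_id)).add continuous_const
  have hsplit : blockGap g h i x = fun v => (⟪g x i, x i - v⟫ + h i (x i)) + -h i v := by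
    funext v
    simp only [blockGap]
    ring
  rw [hsplit]
  exact (hinner.upperSemicontinuous.upperSemicontinuousOn _ |>.add
    (continuous_neg.comp_lowerSemicontinuousOn_antitone hh fun _ _ => neg_le_neg))
    |>.bddAbove_of_isCompact hs

theorem sub_le_sum_blockGap [Fintype ι] [∀ i, CompleteSpace (E i)] {f : PiLp 2 E → ℝ}
    (hf : ConvexOn ℝ univ f) {x : PiLp 2 E} (hfx : HasGradientAt f (g x) x) (y : PiLp 2 E) :
    (f x + ∑ i, h i (x i)) - (f y + ∑ i, h i (y i)) ≤ ∑ i, blockGap g h i x (y i) := by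
  have hgrad := hf.inner_le_sub_of_hasGradientAt hfx y
  have hsum : ∑ i, blockGap g h i x (y i) =
      -⟪g x, y - x⟫ + ∑ i, h i (x i) - ∑ i, h i (y i) := by
    simp only [blockGap, PiLp.inner_apply, Finset.sum_sub_distrib, Finset.sum_add_distrib,
      ← Finset.sum_neg_distrib, ← inner_neg_right, neg_sub, PiLp.sub_apply]
  linarith

end Blocks

theorem stmt10_general
    {n : ℕ} {N : Fin n → ℕ}
    (Xi : ∀ i, Set (Blk N i))
    (hXcp : ∀ i, IsCompact (Xi i))
    (f : Tot N → ℝ) (g : Tot N → Tot N)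
    (hf : ∀ x, HasGradientAt f (g x) x)
    (hg : Continuous g)
    (h : ∀ i, Blk N i → ℝ)
    (hhlsc : ∀ i, LowerSemicontinuousOn (h i) (Xi i))
    (X : Set (Tot N)) (hX : X = {x | ∀ i, x i ∈ Xi i})
    (μ : Tot N → ℝ) (hμ : ∀ x, μ x = f x + ∑ i, h i (x i))
    (φ : ∀ i, Tot N → ℝ)
    (hφ : ∀ i x, φ i x =
      sSup ((fun y => ⟪g x i, x i - y⟫ + h i (x i) - h i y) '' Xi i))
    (δ : ℕ → ℝ)
    (hδ0 : Tendsto δ atTop (𝓝 0))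
    (z : ℕ → Tot N) (hz : ∀ l, z l ∈ X)
    (hzφ : ∀ l i, φ i (z l) ≤ δ l) :
    (∃ zb, MapClusterPt zb atTop z) ∧
    (∀ zb, MapClusterPt zb atTop z →
      zb ∈ X ∧
        ∀ y ∈ X, 0 ≤ ∑ i, (⟪g zb i, y i - zb i⟫ + h i (y i) - h i (zb i))) ∧
    (ConvexOn ℝ Set.univ f →
      Tendsto (fun l => μ (z l)) atTop (𝓝 (sInf (μ '' X))) ∧
        ∀ zb, MapClusterPt zb atTop z → ∀ y ∈ X, μ zb ≤ μ y) := by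
  subst hX
  have hK := PiLp.isCompact_setOf_forall_mem hXcp
  have hgap : ∀ l i, ∀ v ∈ Xi i, blockGap g h i (z l) v ≤ δ l := fun l i v hv =>
    (le_csSup (bddAbove_blockGap_image (hXcp i) (hhlsc i) (z l)) (mem_image_of_mem _ hv)).trans
      (hφ i (z l) ▸ hzφ l i)
  have hmem : ∀ zb, MapClusterPt zb atTop z → zb ∈ {x | ∀ i, x i ∈ Xi i} := fun zb hzb =>
    hK.isClosed.mem_of_mapClusterPt hzb (Eventually.of_forall hz)
  refine ⟨?_, fun zb hzb => ⟨hmem zb hzb, fun y hy => Finset.sum_nonneg fun i _ => ?_⟩,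
    fun hcvx => ?_⟩
  · obtain ⟨zb, -, hzb⟩ :=
      hK.exists_mapClusterPt (f := atTop) (tendsto_principal.2 (Eventually.of_forall hz))
    exact ⟨zb, hzb⟩
  · have hσ := hzb.le_of_lowerSemicontinuousOn (hmem zb hzb)
      (lowerSemicontinuousOn_blockGap hg (hhlsc i) (y i)) hz hδ0 fun l => hgap l i (y i) (hy i)
    simp only [blockGap, inner_sub_right] at hσ ⊢
    linarith
  have hμlsc : LowerSemicontinuousOn μ {x | ∀ i, x i ∈ Xi i} := by
    rw [show μ = _ from funext hμ]
    exact (continuous_iff_continuousAt.2 fun x => (hf x).continuousAt)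
      |>.lowerSemicontinuous.lowerSemicontinuousOn _ |>.add <|
      lowerSemicontinuousOn_sum fun i _ => lowerSemicontinuousOn_apply_of_setOf_forall_mem (hhlsc i)
  have hdescent : ∀ l, ∀ y ∈ {x | ∀ i, x i ∈ Xi i}, μ (z l) ≤ μ y + n * δ l := by
    intro l y hy
    have hsum := Finset.sum_le_sum fun i (_ : i ∈ Finset.univ) => hgap l i (y i) (hy i)
    simp only [Finset.sum_const, Finset.card_univ, Fintype.card_fin, nsmul_eq_mul] at hsum
    linarith [sub_le_sum_blockGap (h := h) hcvx (hf (z l)) y, hμ (z l), hμ y]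
  have hnδ : Tendsto (fun l => n * δ l) atTop (𝓝 0) := by simpa using hδ0.const_mul (n : ℝ)
  exact ⟨hμlsc.tendsto_sInf_image_of_le_add hK hz hnδ hdescent, fun zb hzb y hy =>
    hzb.le_of_lowerSemicontinuousOn (hmem zb hzb) hμlsc hz (by simpa using hnδ.const_add (μ y))
      fun l => hdescent l y hy⟩

theorem stmt10
    {n : ℕ} {N : Fin n → ℕ}
    (Xi : ∀ i, Set (Blk N i))
    (hXne : ∀ i, (Xi i).Nonempty)
    (hXcv : ∀ i, Convex ℝ (Xi i))
    (hXcp : ∀ i, IsCompact (Xi i))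
    (f : Tot N → ℝ) (g : Tot N → Tot N)
    (hf : ∀ x, HasGradientAt f (g x) x)
    (hg : Continuous g)
    (h : ∀ i, Blk N i → ℝ)
    (hhcv : ∀ i, ConvexOn ℝ (Xi i) (h i))
    (hhlsc : ∀ i, LowerSemicontinuousOn (h i) (Xi i))
    (X : Set (Tot N)) (hX : X = {x | ∀ i, x i ∈ Xi i})
    (μ : Tot N → ℝ) (hμ : ∀ x, μ x = f x + ∑ i, h i (x i))
    (φ : ∀ i, Tot N → ℝ)
    (hφ : ∀ i x, φ i x =
      sSup ((fun y => ⟪g x i, x i - y⟫ + h i (x i) - h i y) '' Xi i))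
    (δ : ℕ → ℝ) (hδpos : ∀ l, 0 < δ l) (hδanti : Antitone δ)
    (hδ0 : Tendsto δ atTop (𝓝 0))
    (z : ℕ → Tot N) (hz : ∀ l, z l ∈ X)
    (hzφ : ∀ l i, φ i (z l) ≤ δ l) :
    (∃ zb, MapClusterPt zb atTop z) ∧
    (∀ zb, MapClusterPt zb atTop z →
      zb ∈ X ∧
        ∀ y ∈ X, 0 ≤ ∑ i, (⟪g zb i, y i - zb i⟫ + h i (y i) - h i (zb i))) ∧
    (ConvexOn ℝ Set.univ f →
      Tendsto (fun l => μ (z l)) atTop (𝓝 (sInf (μ '' X))) ∧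
        ∀ zb, MapClusterPt zb atTop z → ∀ y ∈ X, μ zb ≤ μ y) :=
  stmt10_general Xi hXcp f g hf hg h hhlsc X hX μ hμ φ hφ δ hδ0 z hz hzφ
end
end

section
/- Block-Lipschitz descent with pre-defined stepsize: suppose the partial gradients satisfy ‖g_i(x + d^{(i)}) − g_i(x)‖ ≤ L_i ‖d_i‖ for all x and all d, where d^{(i)} has i-th block d_i and zero in all other blocks. Let β ∈ (0,1), x ∈ X, i ∈ {1,…,n}, y_i(x) ∈ Y_i(x), and set d_i = y_i(x) − x_i with d_i ≠ 0. Then for every λ ∈ [0, 1] with λ ≤ 2(1−β) φ_i(x) / (L_i ‖d_i‖²), it holds that μ(x + λ d^{(i)}) − μ(x) ≤ −β λ φ_i(x). -/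
open scoped RealInnerProductSpace
open Filter Topology

noncomputable section

/-!
The smooth part is handled by a descent lemma along the block direction `d`: the block-Lipschitz
bound makes `t ↦ f (x + t • d) - t ⟪g_i x, d_i⟫ - L_i ‖d_i‖² t² / 2` nonincreasing for `t ≥ 0`.
The nonsmooth part is handled by convexity of `h_i` on the segment `[x_i, y_i]`. Since `y_i`
minimizes `Φ_i(x, ·)`, the supremum defining `φ_i(x)` is attained at `y_i`, so the linear terms
add up to `-λ φ_i(x)`, and the step-size bound absorbs the quadratic term into `(1 - β) λ φ_i(x)`.
-/

theorem sub_le_of_hasDerivAt_le_add_mul {F F' : ℝ → ℝ} {c lam : ℝ}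
    (hF : ∀ t, HasDerivAt F (F' t) t) (hF' : ∀ t, 0 < t → F' t ≤ F' 0 + c * t)
    (hlam : 0 ≤ lam) :
    F lam - F 0 ≤ lam * F' 0 + c * lam ^ 2 / 2 := by
  set G : ℝ → ℝ := fun t => F t - (t * F' 0 + c * t ^ 2 / 2)
  have hG : ∀ t, HasDerivAt G (F' t - (F' 0 + c * t)) t := fun t =>
    ((hF t).sub (((hasDerivAt_id t).mul_const (F' 0)).add
      (((hasDerivAt_pow 2 t).const_mul c).div_const 2))).congr_deriv <| by
        simp only [Nat.cast_ofNat, Nat.add_one_sub_one, pow_one]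
        ring
  have hG_anti : AntitoneOn G (Set.Ici 0) :=
    antitoneOn_of_hasDerivWithinAt_nonpos (convex_Ici 0)
      (fun t _ => (hG t).continuousAt.continuousWithinAt)
      (fun t _ => (hG t).hasDerivWithinAt)
      (fun t ht => by
        rw [interior_Ici] at ht
        linarith [hF' t ht])
  have hG_le := hG_anti (le_refl (0 : ℝ)) hlam hlam
  simp only [G] at hG_le
  linarith

theorem PiLp.sum_apply_add_sub_sum_apply_of_eq_zero {ι : Type*} [Fintype ι] {E : ι → Type*}
    [∀ i, SeminormedAddCommGroup (E i)] (φ : ∀ i, E i → ℝ) {i : ι}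
    (x v : PiLp 2 E) (hv : ∀ j, j ≠ i → v j = 0) :
    ∑ j, φ j ((x + v) j) - ∑ j, φ j (x j) = φ i (x i + v i) - φ i (x i) := by
  rw [← Finset.sum_sub_distrib, Finset.sum_eq_single i]
  · rfl
  · intro j _ hj
    simp [hv j hj]
  · simp

section BlockPiLp

variable {ι : Type*} [Fintype ι] {E : ι → Type*}
  [∀ i, NormedAddCommGroup (E i)] [∀ i, InnerProductSpace ℝ (E i)]

theorem PiLp.inner_eq_inner_apply_of_eq_zero {i : ι} (y d : PiLp 2 E)
    (hd : ∀ j, j ≠ i → d j = 0) : ⟪y, d⟫ = ⟪y i, d i⟫ := by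
  rw [PiLp.inner_apply, Finset.sum_eq_single i]
  · intro j _ hj
    rw [hd j hj, inner_zero_right]
  · simp

variable [∀ i, CompleteSpace (E i)]

theorem sub_le_inner_add_of_blockLipschitz_gradient {f : PiLp 2 E → ℝ} {g : PiLp 2 E → PiLp 2 E}
    (hf : ∀ x, HasGradientAt f (g x) x) {i : ι} {L : ℝ}
    (hL : ∀ x d : PiLp 2 E, (∀ j, j ≠ i → d j = 0) → ‖g (x + d) i - g x i‖ ≤ L * ‖d i‖)
    (x d : PiLp 2 E) (hd : ∀ j, j ≠ i → d j = 0) {lam : ℝ} (hlam : 0 ≤ lam) :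
    f (x + lam • d) - f x ≤ lam * ⟪g x i, d i⟫ + L * ‖d i‖ ^ 2 * lam ^ 2 / 2 := by
  have htd : ∀ t : ℝ, ∀ j, j ≠ i → (t • d) j = 0 := fun t j hj => by simp [hd j hj]
  have hF : ∀ t : ℝ, HasDerivAt (fun s : ℝ => f (x + s • d)) ⟪g (x + t • d), d⟫ t := by
    intro t
    have hline : HasDerivAt (fun s : ℝ => x + s • d) d t := by
      simpa using ((hasDerivAt_id t).smul_const d).const_add x
    have hcomp := (hf (x + t • d)).hasFDerivAt.comp_hasDerivAt t hline
    simp only [InnerProductSpace.toDual_apply_apply] at hcomp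
    exact hcomp
  have hF' : ∀ t : ℝ, 0 < t →
      ⟪g (x + t • d), d⟫ ≤ ⟪g (x + (0 : ℝ) • d), d⟫ + L * ‖d i‖ ^ 2 * t := by
    intro t ht
    simp only [zero_smul, add_zero, PiLp.inner_eq_inner_apply_of_eq_zero _ d hd]
    calc ⟪g (x + t • d) i, d i⟫
        = ⟪g x i, d i⟫ + ⟪g (x + t • d) i - g x i, d i⟫ := by rw [inner_sub_left]; ring
      _ ≤ ⟪g x i, d i⟫ + ‖g (x + t • d) i - g x i‖ * ‖d i‖ := by
          gcongr; exact real_inner_le_norm _ _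
      _ ≤ ⟪g x i, d i⟫ + L * ‖(t • d) i‖ * ‖d i‖ := by
          gcongr; exact hL x (t • d) (htd t)
      _ = ⟪g x i, d i⟫ + L * ‖d i‖ ^ 2 * t := by
          rw [PiLp.smul_apply, norm_smul, Real.norm_of_nonneg ht.le]; ring
  simpa [PiLp.inner_eq_inner_apply_of_eq_zero _ d hd] using
    sub_le_of_hasDerivAt_le_add_mul hF hF' hlam

end BlockPiLp

theorem csSup_image_inner_sub_add_sub_eq_of_forall_le {E : Type*} [NormedAddCommGroup E]
    [InnerProductSpace ℝ E] (a u : E) (ψ : E → ℝ) {s : Set E} {y : E} (hy : y ∈ s)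
    (hmin : ∀ z ∈ s, ⟪a, y⟫ + ψ y ≤ ⟪a, z⟫ + ψ z) :
    sSup ((fun z => ⟪a, u - z⟫ + ψ u - ψ z) '' s) = ⟪a, u - y⟫ + ψ u - ψ y :=
  IsGreatest.csSup_eq ⟨⟨y, hy, rfl⟩, by
    rintro _ ⟨z, hz, rfl⟩
    simp only [inner_sub_right]
    linarith [hmin z hz]⟩

theorem ConvexOn.map_add_smul_sub_le {E : Type*} [AddCommGroup E] [Module ℝ E] {s : Set E}
    {ψ : E → ℝ} (hψ : ConvexOn ℝ s ψ) {u y : E} (hu : u ∈ s) (hy : y ∈ s) {t : ℝ}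
    (ht0 : 0 ≤ t) (ht1 : t ≤ 1) :
    ψ (u + t • (y - u)) ≤ ψ u + t * (ψ y - ψ u) := by
  have hseg : u + t • (y - u) = (1 - t) • u + t • y := by module
  rw [hseg]
  refine (hψ.2 hu hy (by linarith) ht0 (by ring)).trans_eq ?_
  simp only [smul_eq_mul]
  ring

theorem stmt11_general
    {n : ℕ} {N : Fin n → ℕ}
    (Xi : ∀ i, Set (Blk N i))
    (f : Tot N → ℝ) (g : Tot N → Tot N)
    (hf : ∀ x, HasGradientAt f (g x) x)
    (h : ∀ i, Blk N i → ℝ)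
    (hhcv : ∀ i, ConvexOn ℝ (Xi i) (h i))
    (X : Set (Tot N)) (hX : X = {x | ∀ i, x i ∈ Xi i})
    (μ : Tot N → ℝ) (hμ : ∀ x, μ x = f x + ∑ i, h i (x i))
    (φ : ∀ i, Tot N → ℝ)
    (hφ : ∀ i x, φ i x =
      sSup ((fun y => ⟪g x i, x i - y⟫ + h i (x i) - h i y) '' Xi i))
    (Y : ∀ i, Tot N → Set (Blk N i))
    (hY : ∀ i x, Y i x = {y ∈ Xi i | ∀ z ∈ Xi i,
      ⟪g x i, y⟫ + h i y ≤ ⟪g x i, z⟫ + h i z})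
    (Li : Fin n → ℝ) (hLipos : ∀ i, 0 < Li i)
    (hLi : ∀ (i : Fin n) (x d : Tot N), (∀ j, j ≠ i → d j = 0) →
      ‖g (x + d) i - g x i‖ ≤ Li i * ‖d i‖)
    (β : ℝ)
    (x : Tot N) (hx : x ∈ X) (i : Fin n)
    (yi : Blk N i) (hyi : yi ∈ Y i x)
    (d : Tot N) (hdi : d i = yi - x i) (hd0 : ∀ j, j ≠ i → d j = 0)
    (hdne : d i ≠ 0)
    (lam : ℝ) (hlam0 : 0 ≤ lam) (hlam1 : lam ≤ 1)
    (hlam : lam ≤ 2 * (1 - β) * φ i x / (Li i * ‖d i‖ ^ 2)) :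
    μ (x + lam • d) - μ x ≤ -(β * lam * φ i x) := by
  obtain ⟨hyX, hymin⟩ : yi ∈ Xi i ∧ ∀ z ∈ Xi i, ⟪g x i, yi⟫ + h i yi ≤ ⟪g x i, z⟫ + h i z := by
    rwa [hY] at hyi
  have hxX : x i ∈ Xi i := by
    subst hX
    exact hx i
  have hφx : φ i x = ⟪g x i, x i - yi⟫ + h i (x i) - h i yi := by
    rw [hφ]
    exact csSup_image_inner_sub_add_sub_eq_of_forall_le _ _ _ hyX hymin
  have hf_le := sub_le_inner_add_of_blockLipschitz_gradient hf (hLi i) x d hd0 hlam0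
  have hh_le := (hhcv i).map_add_smul_sub_le hxX hyX hlam0 hlam1
  rw [← hdi] at hh_le
  have hstep : Li i * ‖d i‖ ^ 2 * lam ^ 2 / 2 ≤ (1 - β) * lam * φ i x := by
    have hLd : 0 < Li i * ‖d i‖ ^ 2 := mul_pos (hLipos i) (pow_pos (norm_pos_iff.mpr hdne) 2)
    nlinarith [mul_le_mul_of_nonneg_left ((le_div_iff₀ hLd).mp hlam) hlam0]
  have hμx := PiLp.sum_apply_add_sub_sum_apply_of_eq_zero h (i := i) x (lam • d)
    (fun j hj => by simp [hd0 j hj])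
  calc μ (x + lam • d) - μ x
      = (f (x + lam • d) - f x) + (h i (x i + lam • d i) - h i (x i)) := by
        rw [PiLp.smul_apply] at hμx
        rw [hμ, hμ]
        linarith
    _ ≤ (lam * ⟪g x i, d i⟫ + Li i * ‖d i‖ ^ 2 * lam ^ 2 / 2) + lam * (h i yi - h i (x i)) := by
        linarith
    _ = -(lam * φ i x) + Li i * ‖d i‖ ^ 2 * lam ^ 2 / 2 := by
        rw [hφx, hdi, inner_sub_right, inner_sub_right]
        ring
    _ ≤ -(β * lam * φ i x) := by linarith

theorem stmt11
    {n : ℕ} {N : Fin n → ℕ}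
    (Xi : ∀ i, Set (Blk N i))
    (hXne : ∀ i, (Xi i).Nonempty)
    (hXcv : ∀ i, Convex ℝ (Xi i))
    (hXcp : ∀ i, IsCompact (Xi i))
    (f : Tot N → ℝ) (g : Tot N → Tot N)
    (hf : ∀ x, HasGradientAt f (g x) x)
    (hg : Continuous g)
    (h : ∀ i, Blk N i → ℝ)
    (hhcv : ∀ i, ConvexOn ℝ (Xi i) (h i))
    (hhlsc : ∀ i, LowerSemicontinuousOn (h i) (Xi i))
    (X : Set (Tot N)) (hX : X = {x | ∀ i, x i ∈ Xi i})
    (μ : Tot N → ℝ) (hμ : ∀ x, μ x = f x + ∑ i, h i (x i))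
    (φ : ∀ i, Tot N → ℝ)
    (hφ : ∀ i x, φ i x =
      sSup ((fun y => ⟪g x i, x i - y⟫ + h i (x i) - h i y) '' Xi i))
    (Y : ∀ i, Tot N → Set (Blk N i))
    (hY : ∀ i x, Y i x = {y ∈ Xi i | ∀ z ∈ Xi i,
      ⟪g x i, y⟫ + h i y ≤ ⟪g x i, z⟫ + h i z})
    (Li : Fin n → ℝ) (hLipos : ∀ i, 0 < Li i)
    (hLi : ∀ (i : Fin n) (x d : Tot N), (∀ j, j ≠ i → d j = 0) →
      ‖g (x + d) i - g x i‖ ≤ Li i * ‖d i‖)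
    (β : ℝ) (hβ : β ∈ Set.Ioo (0 : ℝ) 1)
    (x : Tot N) (hx : x ∈ X) (i : Fin n)
    (yi : Blk N i) (hyi : yi ∈ Y i x)
    (d : Tot N) (hdi : d i = yi - x i) (hd0 : ∀ j, j ≠ i → d j = 0)
    (hdne : d i ≠ 0)
    (lam : ℝ) (hlam0 : 0 ≤ lam) (hlam1 : lam ≤ 1)
    (hlam : lam ≤ 2 * (1 - β) * φ i x / (Li i * ‖d i‖ ^ 2)) :
    μ (x + lam • d) - μ x ≤ -(β * lam * φ i x) :=
  stmt11_general Xi f g hf h hhcv X hX μ hμ φ hφ Y hY Li hLipos hLi β x hx i yi hyi d hdi hd0 hdne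
    lam hlam0 hlam1 hlam
end
end
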